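/- Let R be a commutative noetherian local ring, C a semidualizing R-module, and M a finitely generated R-module of finite C-injective dimension. Then C ⊗_R M is a finitely generated R-module of finite injective dimension, and M ≅ Hom_R(C, C ⊗_R M); moreover if M is nonzero then C ⊗_R M is nonzero. -/

import Mathlib

set_option linter.unusedVariables false
open CategoryTheory TensorProduct

/-- `pdLE R n M`: the `R`-module `M` has projective dimension at most `n`,
i.e. it admits a projective resolution of length `n`. -/
def pdLE (R : Type) [CommRing R] : ℕ → (M : Type) → (iM : AddCommGroup M) → (jM : Module R M) → Prop
  | 0, M, iM, jM => Module.Projective R M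
  | n+1, M, iM, jM =>
      ∃ (P : Type) (iP : AddCommGroup P) (jP : Module R P) (f : P →ₗ[R] M),
        Module.Projective R P ∧ Function.Surjective f ∧
          pdLE R n (LinearMap.ker f) inferInstance inferInstance

/-- `idLE R n M`: `M` has injective dimension at most `n`,
i.e. it admits an injective resolution of length `n`. -/
def idLE (R : Type) [CommRing R] : ℕ → (M : Type) → (iM : AddCommGroup M) → (jM : Module R M) → Prop
  | 0, M, iM, jM => Module.Injective R M
  | n+1, M, iM, jM =>
      ∃ (I : Type) (iI : AddCommGroup I) (jI : Module R I) (f : M →ₗ[R] I),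
        Module.Injective R I ∧ Function.Injective f ∧
          idLE R n (I ⧸ LinearMap.range f) inferInstance inferInstance

/-- The projective dimension of `M`, as an element of `ℕ∞` (`⊤` means infinite). -/
noncomputable def projDim (R : Type) [CommRing R] (M : Type) [AddCommGroup M] [Module R M] : ℕ∞ :=
  sInf {n : ℕ∞ | ∃ m : ℕ, n = m ∧ pdLE R m M inferInstance inferInstance}

/-- The injective dimension of `M`, as an element of `ℕ∞`. -/
noncomputable def injDim (R : Type) [CommRing R] (M : Type) [AddCommGroup M] [Module R M] : ℕ∞ :=
  sInf {n : ℕ∞ | ∃ m : ℕ, n = m ∧ idLE R m M inferInstance inferInstance}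

/-- A commutative noetherian (local) ring is Gorenstein if it has finite injective
dimension as a module over itself. -/
def IsGorensteinRing (R : Type) [CommRing R] : Prop :=
  ∃ n : ℕ, idLE R n R inferInstance inferInstance

/-- `extGroup R M N i` : the `i`-th Ext module `Ext^i_R(M,N)`. -/
noncomputable def extGroup (R : Type) [CommRing R] (M N : Type) [AddCommGroup M] [Module R M]
    [AddCommGroup N] [Module R N] (i : ℕ) : ModuleCat R :=
  ((Ext R (ModuleCat R) i).obj (Opposite.op (ModuleCat.of R M))).obj (ModuleCat.of R N)

/-- `torGroup R M N i` : the `i`-th Tor module `Tor_i^R(M,N)`. -/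
noncomputable def torGroup (R : Type) [CommRing R] (M N : Type) [AddCommGroup M] [Module R M]
    [AddCommGroup N] [Module R N] (i : ℕ) : ModuleCat R :=
  ((Tor (ModuleCat R) i).obj (ModuleCat.of R M)).obj (ModuleCat.of R N)

/-- `C` is a semidualizing `R`-module: it is finitely generated, the homothety map
`R → Hom_R(C,C)` is bijective, and `Ext^i_R(C,C) = 0` for all `i > 0`. -/
def IsSemidualizing (R : Type) [CommRing R] (C : Type) [AddCommGroup C] [Module R C] : Prop :=
  Module.Finite R C ∧ Function.Bijective (LinearMap.lsmul R C) ∧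
    ∀ i : ℕ, 0 < i → Subsingleton (extGroup R C C i)

/-- `CpdLE R C n M` : `M` has `C`-projective dimension at most `n`, i.e. there is an exact
sequence `0 → C⊗Pₙ → ⋯ → C⊗P₀ → M → 0` with each `Pᵢ` projective. -/
def CpdLE (R C : Type) [CommRing R] [AddCommGroup C] [Module R C] :
    ℕ → (M : Type) → (iM : AddCommGroup M) → (jM : Module R M) → Prop
  | 0, M, iM, jM =>
      ∃ (P : Type) (iP : AddCommGroup P) (jP : Module R P),
        Module.Projective R P ∧ Nonempty ((TensorProduct R C P) ≃ₗ[R] M)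
  | n+1, M, iM, jM =>
      ∃ (P : Type) (iP : AddCommGroup P) (jP : Module R P)
        (f : TensorProduct R C P →ₗ[R] M),
        Module.Projective R P ∧ Function.Surjective f ∧
          CpdLE R C n (LinearMap.ker f) inferInstance inferInstance

/-- `CidLE R C n M` : `M` has `C`-injective dimension at most `n`, i.e. there is an exact
sequence `0 → M → Hom(C,I⁰) → ⋯ → Hom(C,Iⁿ) → 0` with each `Iⁱ` injective. -/
def CidLE (R C : Type) [CommRing R] [AddCommGroup C] [Module R C] :
    ℕ → (M : Type) → (iM : AddCommGroup M) → (jM : Module R M) → Prop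
  | 0, M, iM, jM =>
      ∃ (I : Type) (iI : AddCommGroup I) (jI : Module R I),
        Module.Injective R I ∧ Nonempty (M ≃ₗ[R] (C →ₗ[R] I))
  | n+1, M, iM, jM =>
      ∃ (I : Type) (iI : AddCommGroup I) (jI : Module R I)
        (f : M →ₗ[R] (C →ₗ[R] I)),
        Module.Injective R I ∧ Function.Injective f ∧
          CidLE R C n ((C →ₗ[R] I) ⧸ LinearMap.range f) inferInstance inferInstance

/-- The depth of a module over a local ring: the supremum of lengths of `M`-regular
sequences contained in the maximal ideal. -/
noncomputable def rdepth (R : Type) [CommRing R] [IsLocalRing R]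
    (M : Type) [AddCommGroup M] [Module R M] : ℕ∞ :=
  sSup {n : ℕ∞ | ∃ rs : List R, (rs.length : ℕ∞) = n ∧
    (∀ r ∈ rs, r ∈ IsLocalRing.maximalIdeal R) ∧ RingTheory.Sequence.IsRegular M rs}

/-
Induct on the length of a `C`-injective resolution, whose first step is a short exact sequence
`0 → M → Hom(C, I) → Q → 0` with `I` injective and `Q` of smaller `C`-injective dimension.

For `X` finitely presented and `I` injective, the Hom evaluation map
`X ⊗ Hom(Y, I) → Hom(Hom(X, Y), I)` is an isomorphism: it is one for `X` finite free, and both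
sides are right exact in `X`. Taking `X = C` and using `R ≅ Hom(C, C)` gives `C ⊗ Hom(C, I) ≅ I`
and `Hom(C, I) ≅ Hom(C, C ⊗ Hom(C, I))`; taking for `X` the terms of a finite free resolution of
`C` gives `Tor_i(C, Hom(C, I)) ≅ Hom(Ext^i(C, C), I) = 0` for `i > 0`.

In the inductive step `Tor_{>0}(C, Q) = 0`, so `0 → C ⊗ M → C ⊗ Hom(C, I) ≅ I → C ⊗ Q → 0` is
exact, which bounds the injective dimension of `C ⊗ M`; the five lemma against
`0 → Hom(C, C ⊗ M) → Hom(C, C ⊗ Hom(C, I)) → Hom(C, C ⊗ Q)` shows that `M → Hom(C, C ⊗ M)` is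
an isomorphism, and the long exact `Tor` sequence gives `Tor_{>0}(C, M) = 0`. Injectivity of
`M → Hom(C, C ⊗ M)` makes `C ⊗ M ≠ 0` when `M ≠ 0`.
-/

open LinearMap Function

universe u

section HomExactness

variable {R : Type u} [CommRing R] {A B D : Type*} [AddCommGroup A] [Module R A]
  [AddCommGroup B] [Module R B] [AddCommGroup D] [Module R D]

theorem Module.Injective.of_linearEquiv {I J : Type u} [AddCommGroup I] [Module R I]
    [AddCommGroup J] [Module R J] [Module.Injective R I] (e : I ≃ₗ[R] J) :
    Module.Injective R J :=
  ((Module.Baer.of_injective ‹_›).of_equiv e).injective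

theorem Module.Injective.surjective_lcomp {I : Type u} [AddCommGroup I] [Module R I]
    [Module.Injective R I] {f : A →ₗ[R] B} (hf : Function.Injective f) :
    Surjective (lcomp R I f) :=
  fun φ => Module.Injective.extension_property R I _ _ f hf φ

theorem Module.Injective.exact_lcomp {I : Type u} [AddCommGroup I] [Module R I]
    [Module.Injective R I] {f : A →ₗ[R] B} {g : B →ₗ[R] D} (hfg : Exact f g) :
    Exact (lcomp R I g) (lcomp R I f) := by
  have hrestrict : Exact f g.rangeRestrict := by
    rwa [LinearMap.exact_iff, ker_rangeRestrict, ← LinearMap.exact_iff]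
  -- `lcomp R I g` is `lcomp R I g.rangeRestrict` after the surjection `lcomp R I (range g).subtype`
  exact (Module.Injective.surjective_lcomp (f := (range g).subtype)
    Subtype.val_injective).comp_exact_iff_exact.2
    (exact_lcomp_of_exact_of_surjective I hrestrict g.surjective_rangeRestrict)

theorem exact_compRight_of_injective (N : Type*) [AddCommGroup N] [Module R N]
    {f : A →ₗ[R] B} {g : B →ₗ[R] D} (hf : Injective f) (hfg : Exact f g) :
    Exact (compRight R f : (N →ₗ[R] A) →ₗ[R] N →ₗ[R] B) (compRight R g) := by
  intro φ
  refine ⟨fun hφ => ?_, ?_⟩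
  · have hmem : ∀ n, φ n ∈ range f := fun n => (hfg (φ n)).1 (LinearMap.congr_fun hφ n)
    let e := LinearEquiv.ofInjective f hf
    refine ⟨e.symm.toLinearMap ∘ₗ φ.codRestrict (range f) hmem, LinearMap.ext fun n => ?_⟩
    exact congrArg Subtype.val (e.apply_symm_apply ⟨φ n, hmem n⟩)
  · rintro ⟨ψ, rfl⟩
    ext n
    exact hfg.apply_apply_eq_zero (ψ n)

end HomExactness

section InjectiveDimension

variable {R : Type} [CommRing R] {X Y : Type} [AddCommGroup X] [Module R X] [AddCommGroup Y]
  [Module R Y]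

theorem idLE_of_linearEquiv {n : ℕ} (e : X ≃ₗ[R] Y)
    (hX : idLE R n X inferInstance inferInstance) : idLE R n Y inferInstance inferInstance := by
  induction n generalizing X Y with
  | zero =>
    have : Module.Injective R X := hX
    exact Module.Injective.of_linearEquiv e
  | succ n ih =>
    obtain ⟨I, _, _, f, hI, hf, hQ⟩ := hX
    have hrange : range (f ∘ₗ e.symm.toLinearMap) = range f :=
      range_comp_of_range_eq_top f e.symm.range
    exact ⟨I, _, _, f ∘ₗ e.symm.toLinearMap, hI, hf.comp e.symm.injective,
      ih (Submodule.quotEquivOfEq _ _ hrange.symm) hQ⟩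

theorem idLE_succ_of_exact {n : ℕ} {I Q : Type} [AddCommGroup I] [Module R I]
    [AddCommGroup Q] [Module R Q] [Module.Injective R I] {f : X →ₗ[R] I} {g : I →ₗ[R] Q}
    (hf : Injective f) (hfg : Exact f g) (hg : Surjective g)
    (hQ : idLE R n Q inferInstance inferInstance) :
    idLE R (n + 1) X inferInstance inferInstance :=
  ⟨I, _, _, f, ‹_›, hf, idLE_of_linearEquiv (hfg.linearEquivOfSurjective hg).symm hQ⟩

end InjectiveDimension

section TensorChase

open TensorProduct

variable {R : Type*} [CommRing R] {M H Q : Type*} [AddCommGroup M] [Module R M]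
  [AddCommGroup H] [Module R H] [AddCommGroup Q] [Module R Q]

theorem rTensor_lTensor_apply {A B : Type*} [AddCommGroup A] [Module R A] [AddCommGroup B]
    [Module R B] (u : A →ₗ[R] B) (v : M →ₗ[R] H) (x : A ⊗[R] M) :
    rTensor H u (lTensor A v x) = lTensor B v (rTensor M u x) := by
  rw [← LinearMap.comp_apply, rTensor_comp_lTensor, ← lTensor_comp_rTensor,
    LinearMap.comp_apply]

variable {A₃ A₂ A₁ : Type*} [AddCommGroup A₃] [Module R A₃] [AddCommGroup A₂] [Module R A₂]
  [AddCommGroup A₁] [Module R A₁] [Module.Flat R A₁]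
  {d₂ : A₃ →ₗ[R] A₂} {d₁ : A₂ →ₗ[R] A₁} {f : M →ₗ[R] H} {g : H →ₗ[R] Q}

/-- The chase behind the connecting map of the long exact `Tor` sequence of
`0 → M → H → Q → 0`. -/
theorem mem_range_rTensor_of_lTensor_mem_range (hd : d₁ ∘ₗ d₂ = 0) (hf : Injective f)
    (hfg : Exact f g) (hg : Surjective g) (hQ : Exact (rTensor Q d₂) (rTensor Q d₁))
    {x : A₁ ⊗[R] M} (hx : lTensor A₁ f x ∈ range (rTensor H d₁)) :
    x ∈ range (rTensor M d₁) := by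
  obtain ⟨y, hy⟩ := hx
  have hgy : rTensor Q d₁ (lTensor A₂ g y) = 0 := by
    rw [rTensor_lTensor_apply, hy, ← lTensor_comp_apply, hfg.linearMap_comp_eq_zero,
      lTensor_zero, LinearMap.zero_apply]
  obtain ⟨w, hw⟩ := (hQ _).1 hgy
  obtain ⟨w, rfl⟩ := lTensor_surjective A₃ hg w
  have hcycle : lTensor A₂ g (y - rTensor H d₂ w) = 0 := by
    rw [map_sub, ← rTensor_lTensor_apply, hw, sub_self]
  obtain ⟨z, hz⟩ := (lTensor_exact A₂ hfg hg _).1 hcycle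
  refine ⟨z, Module.Flat.lTensor_preserves_injective_linearMap f hf ?_⟩
  rw [← rTensor_lTensor_apply, hz, map_sub, hy, ← rTensor_comp_apply, hd, rTensor_zero,
    LinearMap.zero_apply, sub_zero]

end TensorChase

section HomEvaluation

open TensorProduct

variable (R : Type*) [CommRing R] (X Y I : Type*) [AddCommGroup X] [Module R X]
  [AddCommGroup Y] [Module R Y] [AddCommGroup I] [Module R I]

noncomputable def homEvaluation : X ⊗[R] (Y →ₗ[R] I) →ₗ[R] (X →ₗ[R] Y) →ₗ[R] I :=
  TensorProduct.lift ((llcomp R (X →ₗ[R] Y) Y I).flip ∘ₗ applyₗ)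

variable {R X Y I}

@[simp]
theorem homEvaluation_tmul (x : X) (φ : Y →ₗ[R] I) (g : X →ₗ[R] Y) :
    homEvaluation R X Y I (x ⊗ₜ φ) g = φ (g x) := rfl

theorem homEvaluation_comp_rTensor {X' : Type*} [AddCommGroup X'] [Module R X']
    (u : X' →ₗ[R] X) :
    homEvaluation R X Y I ∘ₗ rTensor (Y →ₗ[R] I) u =
      lcomp R I (lcomp R Y u) ∘ₗ homEvaluation R X' Y I :=
  TensorProduct.ext' fun _ _ => rfl

variable (Y I) in
theorem homEvaluation_bijective_pi (ι : Type*) [Fintype ι] [DecidableEq ι] :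
    Bijective (homEvaluation R (ι → R) Y I) := by
  let e := ((TensorProduct.comm R (ι → R) (Y →ₗ[R] I)).trans
    (piScalarRight R R (Y →ₗ[R] I) ι)).trans
    ((lsum R (fun _ => Y) R).trans (LinearEquiv.congrLeft I R ((Pi.basisFun R ι).constr R)))
  have he : homEvaluation R (ι → R) Y I = e.toLinearMap := by
    refine TensorProduct.ext' fun x φ => LinearMap.ext fun g => ?_
    conv_lhs => rw [pi_eq_sum_univ' x]
    simp [e]
  rw [he]
  exact e.bijective

end HomEvaluation

section Evaluation

open TensorProduct

variable {R : Type u} [CommRing R] {C : Type*} [AddCommGroup C] [Module R C]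
  {I : Type u} [AddCommGroup I] [Module R I]

theorem homEvaluation_bijective {X Y : Type*} [AddCommGroup X] [Module R X] [AddCommGroup Y]
    [Module R Y] [Module.Injective R I] [Module.FinitePresentation R X] :
    Bijective (homEvaluation R X Y I) := by
  obtain ⟨n, m, ε, d, hε, hdε⟩ := Module.FinitePresentation.exists_fin' R X
  exact bijective_of_surjective_of_bijective_of_right_exact _ _ _ _ _ _ _
    (homEvaluation_comp_rTensor d).symm (homEvaluation_comp_rTensor ε).symm
    (rTensor_exact _ hdε hε)
    (Module.Injective.exact_lcomp (exact_lcomp_of_exact_of_surjective Y hdε hε))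
    (homEvaluation_bijective_pi Y I _).2 (homEvaluation_bijective_pi Y I _)
    (rTensor_surjective _ hε)
    (Module.Injective.surjective_lcomp (lcomp_injective_of_surjective (N := Y) ε hε))

theorem bijective_lcomp_of_bijective {A B : Type*} [AddCommGroup A] [Module R A]
    [AddCommGroup B] [Module R B] {f : A →ₗ[R] B} (hf : Bijective f) :
    Bijective (lcomp R I f) :=
  (LinearEquiv.congrLeft I R (LinearEquiv.ofBijective f hf).symm).bijective

/-- The evaluation `C ⊗ Hom(C, I) → I` is the Hom evaluation map followed by
`Hom(Hom(C, C), I) ≅ Hom(R, I) ≅ I`. -/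
theorem bijective_lift_applyₗ [Module.Injective R I] [Module.FinitePresentation R C]
    (hC : Bijective (lsmul R C)) :
    Bijective (TensorProduct.lift (applyₗ : C →ₗ[R] (C →ₗ[R] I) →ₗ[R] I)) := by
  have hfactor : TensorProduct.lift (applyₗ : C →ₗ[R] (C →ₗ[R] I) →ₗ[R] I) =
      (ringLmapEquivSelf R R I).toLinearMap ∘ₗ lcomp R I (lsmul R C) ∘ₗ
        homEvaluation R C C I :=
    TensorProduct.ext' fun c φ => (congrArg φ (one_smul R c)).symm
  rw [hfactor]
  exact (ringLmapEquivSelf R R I).bijective.comp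
    ((bijective_lcomp_of_bijective hC).comp homEvaluation_bijective)

theorem bijective_mk_flip_hom [Module.Injective R I] [Module.FinitePresentation R C]
    (hC : Bijective (lsmul R C)) : Bijective (TensorProduct.mk R C (C →ₗ[R] I)).flip := by
  let ev := LinearEquiv.ofBijective _ (bijective_lift_applyₗ (I := I) hC)
  have hleft : ev.congrRight ∘ (TensorProduct.mk R C (C →ₗ[R] I)).flip = id := rfl
  rw [← Bijective.of_comp_iff' ev.congrRight.bijective, hleft]
  exact bijective_id

theorem bijective_mk_flip_iff_of_linearEquiv {M N : Type*} [AddCommGroup M] [Module R M]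
    [AddCommGroup N] [Module R N] (e : M ≃ₗ[R] N) :
    Bijective (TensorProduct.mk R C M).flip ↔ Bijective (TensorProduct.mk R C N).flip := by
  have hnat : (TensorProduct.mk R C N).flip ∘ e =
      (LinearEquiv.congrRight (e.lTensor C)) ∘ (TensorProduct.mk R C M).flip := rfl
  rw [← Bijective.of_comp_iff _ e.bijective, hnat,
    Bijective.of_comp_iff' (LinearEquiv.congrRight (e.lTensor C)).bijective]

end Evaluation

section Resolution

variable (R : Type) [CommRing R] (C : Type) [AddCommGroup C] [Module R C]

structure FinFreeResolution where
  rank : ℕ → ℕ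
  d : ∀ n, (Fin (rank (n + 1)) → R) →ₗ[R] (Fin (rank n) → R)
  ε : (Fin (rank 0) → R) →ₗ[R] C
  surjective_ε : Surjective ε
  exact_d_ε : Exact (d 0) ε
  exact_d_d : ∀ n, Exact (d (n + 1)) (d n)

variable {R C}

theorem FinFreeResolution.nonempty [IsNoetherianRing R] [Module.Finite R C] :
    Nonempty (FinFreeResolution R C) := by
  obtain ⟨k₀, ε, hε⟩ := Module.Finite.exists_fin' R C
  have hcover : ∀ (m : ℕ) (K : Submodule R (Fin m → R)),
      ∃ (k : ℕ) (f : (Fin k → R) →ₗ[R] (Fin m → R)), range f = K := fun m K => by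
    obtain ⟨k, f, hf⟩ := Module.Finite.exists_fin' R K
    exact ⟨k, K.subtype ∘ₗ f, by rw [range_comp, range_eq_top.2 hf, Submodule.map_subtype_top]⟩
  choose k f hf using hcover
  -- the `n`-th syzygy of `C`, as a submodule of `R^(rank n)`
  let syzygy : ℕ → Σ m, Submodule R (Fin m → R) := fun n =>
    Nat.rec ⟨k₀, ker ε⟩ (fun _ K => ⟨k K.1 K.2, ker (f K.1 K.2)⟩) n
  exact ⟨{
    rank n := (syzygy n).1
    d n := f (syzygy n).1 (syzygy n).2
    ε := ε
    surjective_ε := hε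
    exact_d_ε := LinearMap.exact_iff.2 (hf _ _).symm
    exact_d_d n := LinearMap.exact_iff.2 (hf _ _).symm }⟩

namespace FinFreeResolution

variable (P : FinFreeResolution R C)

noncomputable def complex : ChainComplex (ModuleCat R) ℕ :=
  ChainComplex.of (fun n => ModuleCat.of R (Fin (P.rank n) → R))
    (fun n => ModuleCat.ofHom (P.d n))
    fun n => ModuleCat.hom_ext (P.exact_d_d n).linearMap_comp_eq_zero

theorem complex_d (n : ℕ) : P.complex.d (n + 1) n = ModuleCat.ofHom (P.d n) := by
  simp [complex]

theorem complex_d_comp_ε : P.complex.d 1 0 ≫ ModuleCat.ofHom P.ε = 0 := by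
  rw [complex_d]
  exact ModuleCat.hom_ext P.exact_d_ε.linearMap_comp_eq_zero

noncomputable def projectiveResolution : ProjectiveResolution (ModuleCat.of R C) where
  complex := P.complex
  projective n := (IsProjective.iff_projective _).1
    (inferInstanceAs (Module.Projective R (Fin (P.rank n) → R)))
  π := (ChainComplex.toSingle₀Equiv _ _).symm ⟨ModuleCat.ofHom P.ε, P.complex_d_comp_ε⟩
  quasiIso := ⟨fun n => by
    cases n with
    | zero =>
      rw [ChainComplex.quasiIsoAt₀_iff, ShortComplex.quasiIso_iff_of_zeros' _ rfl rfl rfl,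
        ShortComplex.ShortExact.moduleCat_exact_iff_function_exact,
        ModuleCat.epi_iff_surjective]
      refine ⟨?_, P.surjective_ε⟩
      show Exact (P.complex.d 1 0).hom P.ε
      rw [complex_d]
      exact P.exact_d_ε
    | succ n =>
      rw [quasiIsoAt_iff_exactAt' (hL := ChainComplex.exactAt_succ_single_obj ..),
        HomologicalComplex.exactAt_iff' _ (n + 2) (n + 1) n (by simp) (by simp),
        ShortComplex.ShortExact.moduleCat_exact_iff_function_exact]
      show Exact (P.complex.d (n + 2) (n + 1)).hom (P.complex.d (n + 1) n).hom
      rw [complex_d, complex_d]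
      exact P.exact_d_d n⟩

theorem exact_lcomp_d (N : Type) [AddCommGroup N] [Module R N] (n : ℕ)
    (hN : Subsingleton (extGroup R C N (n + 1))) :
    Exact (lcomp R N (P.d n)) (lcomp R N (P.d (n + 1))) := by
  let K := P.projectiveResolution.complex.linearYonedaObj R (ModuleCat.of R N)
  have hK : Exact (K.d n (n + 1)).hom (K.d (n + 1) (n + 2)).hom := by
    have hK : K.ExactAt (n + 1) := by
      rw [HomologicalComplex.exactAt_iff_isZero_homology]
      exact (@ModuleCat.isZero_of_subsingleton R _ _ hN).of_iso
        (P.projectiveResolution.isoExt (n + 1) _).symm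
    rwa [HomologicalComplex.exactAt_iff' _ n (n + 1) (n + 2) (by simp) (by simp),
      ShortComplex.ShortExact.moduleCat_exact_iff_function_exact] at hK
  refine (Exact.iff_of_ladder_linearEquiv (e₁ := ModuleCat.homLinearEquiv (S := R))
    (e₂ := ModuleCat.homLinearEquiv (S := R)) (e₃ := ModuleCat.homLinearEquiv (S := R))
    ?_ ?_).2 hK
  all_goals
    ext φ
    simp only [K, projectiveResolution, ChainComplex.linearYonedaObj_d, complex_d]
    rfl

end FinFreeResolution

end Resolution

namespace FinFreeResolution

open TensorProduct

variable {R C : Type} [CommRing R] [AddCommGroup C] [Module R C] (P : FinFreeResolution R C)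
  {M H Q : Type*} [AddCommGroup M] [Module R M] [AddCommGroup H] [Module R H]
  [AddCommGroup Q] [Module R Q]

/-- `Tor_i^R(C, M) = 0` for all `i > 0`, computed with the resolution `P`. -/
def TorVanishing (M : Type*) [AddCommGroup M] [Module R M] : Prop :=
  ∀ n, Exact (rTensor M (P.d (n + 1))) (rTensor M (P.d n))

variable {P}

theorem TorVanishing.of_linearEquiv (hM : P.TorVanishing M) (e : M ≃ₗ[R] H) :
    P.TorVanishing H := fun n =>
  (exact_iff_of_surjective_of_bijective_of_injective _ _ _ _
    (e.lTensor _).toLinearMap (e.lTensor _).toLinearMap (e.lTensor _).toLinearMap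
    (LinearMap.ext (rTensor_lTensor_apply _ e.toLinearMap))
    (LinearMap.ext (rTensor_lTensor_apply _ e.toLinearMap))
    (e.lTensor _).surjective (e.lTensor _).bijective (e.lTensor _).injective).1 (hM n)

variable (P) in
/-- The Hom evaluation map identifies `P ⊗ Hom(N, I)` with `Hom(Hom(P, N), I)`, whose homology is
`Hom(Ext^*(C, N), I)`. -/
theorem torVanishing_hom (N I : Type) [AddCommGroup N] [Module R N] [AddCommGroup I]
    [Module R I] [Module.Injective R I] (hN : ∀ i, 0 < i → Subsingleton (extGroup R C N i)) :
    P.TorVanishing (N →ₗ[R] I) := fun n =>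
  (exact_iff_of_surjective_of_bijective_of_injective _ _ _ _ _ _ _
    (homEvaluation_comp_rTensor _).symm (homEvaluation_comp_rTensor _).symm
    (homEvaluation_bijective_pi N I _).2 (homEvaluation_bijective_pi N I _)
    (homEvaluation_bijective_pi N I _).1).2
    (Module.Injective.exact_lcomp (P.exact_lcomp_d N n (hN (n + 1) n.succ_pos)))

variable {f : M →ₗ[R] H} {g : H →ₗ[R] Q}

theorem TorVanishing.of_shortExact (hf : Injective f) (hfg : Exact f g) (hg : Surjective g)
    (hH : P.TorVanishing H) (hQ : P.TorVanishing Q) : P.TorVanishing M := fun n =>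
  exact_of_comp_of_mem_range
    (by rw [← rTensor_comp, (P.exact_d_d n).linearMap_comp_eq_zero, rTensor_zero])
    fun x hx => mem_range_rTensor_of_lTensor_mem_range
      (P.exact_d_d (n + 1)).linearMap_comp_eq_zero hf hfg hg (hQ (n + 1))
      ((hH n _).1 (by rw [rTensor_lTensor_apply, hx, map_zero]))

theorem injective_lTensor_of_torVanishing (hf : Injective f) (hfg : Exact f g)
    (hg : Surjective g) (hQ : P.TorVanishing Q) : Injective (lTensor C f) := by
  refine (injective_iff_map_eq_zero _).2 fun a ha => ?_
  obtain ⟨x, rfl⟩ := rTensor_surjective M P.surjective_ε a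
  obtain ⟨z, rfl⟩ := mem_range_rTensor_of_lTensor_mem_range
    (P.exact_d_d 0).linearMap_comp_eq_zero hf hfg hg (hQ 0)
    ((rTensor_exact H P.exact_d_ε P.surjective_ε _).1 (by rw [rTensor_lTensor_apply, ha]))
  rw [← rTensor_comp_apply, P.exact_d_ε.linearMap_comp_eq_zero, rTensor_zero,
    LinearMap.zero_apply]

variable (P) in
theorem torVanishing_of_CidLE (hext : ∀ i, 0 < i → Subsingleton (extGroup R C C i))
    {n : ℕ} {M : Type} [AddCommGroup M] [Module R M]
    (hM : CidLE R C n M inferInstance inferInstance) : P.TorVanishing M := by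
  induction n generalizing M with
  | zero =>
    obtain ⟨I, _, _, hI, ⟨e⟩⟩ := hM
    exact (P.torVanishing_hom C I hext).of_linearEquiv e.symm
  | succ n ih =>
    obtain ⟨I, _, _, f, hI, hf, hQ⟩ := hM
    exact TorVanishing.of_shortExact hf f.exact_map_mkQ_range (Submodule.mkQ_surjective _)
      (P.torVanishing_hom C I hext) (ih hQ)

end FinFreeResolution

section AuslanderClass

open TensorProduct

variable {R C : Type} [CommRing R] [IsNoetherianRing R] [AddCommGroup C] [Module R C]
  {M : Type} [AddCommGroup M] [Module R M]

theorem bijective_mk_flip_of_CidLE (hC : IsSemidualizing R C) {n : ℕ}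
    (hM : CidLE R C n M inferInstance inferInstance) :
    Bijective (TensorProduct.mk R C M).flip := by
  obtain ⟨_, hsmul, hext⟩ := hC
  have := Module.finitePresentation_of_finite R C
  obtain ⟨P⟩ := FinFreeResolution.nonempty (R := R) (C := C)
  induction n generalizing M with
  | zero =>
    obtain ⟨I, _, _, hI, ⟨e⟩⟩ := hM
    exact (bijective_mk_flip_iff_of_linearEquiv e).2 (bijective_mk_flip_hom hsmul)
  | succ n ih =>
    obtain ⟨I, _, _, f, hI, hf, hQ⟩ := hM
    have hfg := f.exact_map_mkQ_range
    have hg := Submodule.mkQ_surjective (range f)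
    have hfC := FinFreeResolution.injective_lTensor_of_torVanishing hf hfg hg
      (P.torVanishing_of_CidLE hext hQ)
    exact bijective_of_bijective_of_injective_of_left_exact f (range f).mkQ
      (compRight R (lTensor C f)) (compRight R (lTensor C (range f).mkQ)) _ _ _ rfl rfl hfg
      (exact_compRight_of_injective C hfC (lTensor_exact C hfg hg))
      (bijective_mk_flip_hom hsmul) (ih hQ).1 hf
      fun φ ψ h => LinearMap.ext fun c => hfC (LinearMap.congr_fun h c)

theorem idLE_tensor_of_CidLE (hC : IsSemidualizing R C) {n : ℕ}
    (hM : CidLE R C n M inferInstance inferInstance) :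
    idLE R n (C ⊗[R] M) inferInstance inferInstance := by
  obtain ⟨_, hsmul, hext⟩ := hC
  have := Module.finitePresentation_of_finite R C
  obtain ⟨P⟩ := FinFreeResolution.nonempty (R := R) (C := C)
  induction n generalizing M with
  | zero =>
    obtain ⟨I, _, _, hI, ⟨e⟩⟩ := hM
    exact Module.Injective.of_linearEquiv
      ((e.lTensor C).trans (LinearEquiv.ofBijective _ (bijective_lift_applyₗ hsmul))).symm
  | succ n ih =>
    obtain ⟨I, _, _, f, hI, hf, hQ⟩ := hM
    have hfg := f.exact_map_mkQ_range
    have hg := Submodule.mkQ_surjective (range f)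
    let ev := LinearEquiv.ofBijective _ (bijective_lift_applyₗ (I := I) hsmul)
    exact idLE_succ_of_exact (f := ev.toLinearMap ∘ₗ lTensor C f)
      (g := lTensor C (range f).mkQ ∘ₗ ev.symm.toLinearMap)
      (ev.injective.comp (FinFreeResolution.injective_lTensor_of_torVanishing hf hfg hg
        (P.torVanishing_of_CidLE hext hQ)))
      ((ev.conj_exact_iff_exact _ _).2 (lTensor_exact C hfg hg))
      ((lTensor_surjective C hg).comp ev.symm.surjective) (ih hQ)

end AuslanderClass

theorem finite_Cid_mem_Auslander_class_general (R : Type) [CommRing R] [IsNoetherianRing R]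
    (C : Type) [AddCommGroup C] [Module R C] (hC : IsSemidualizing R C)
    (M : Type) [AddCommGroup M] [Module R M] [Module.Finite R M]
    (hCid : ∃ n : ℕ, CidLE R C n M inferInstance inferInstance) :
    Module.Finite R (TensorProduct R C M) ∧
    (∃ n : ℕ, idLE R n (TensorProduct R C M) inferInstance inferInstance) ∧
    Function.Bijective ((TensorProduct.mk R C M).flip) ∧
    (Nontrivial M → Nontrivial (TensorProduct R C M)) := by
  have : Module.Finite R C := hC.1
  obtain ⟨n, hn⟩ := hCid
  have hμ := bijective_mk_flip_of_CidLE hC hn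
  refine ⟨inferInstance, ⟨n, idLE_tensor_of_CidLE hC hn⟩, hμ, fun _ => ?_⟩
  have := hμ.injective.nontrivial
  exact (subsingleton_or_nontrivial _).resolve_left fun _ =>
    not_subsingleton (C →ₗ[R] C ⊗[R] M) inferInstance

/-- If `C` is semidualizing and `M` is finitely generated of finite `C`-injective dimension
over a noetherian local ring, then `C ⊗_R M` is finitely generated of finite injective
dimension, the coevaluation map `M → Hom_R(C, C ⊗_R M)` is an isomorphism, and `C ⊗_R M ≠ 0`
whenever `M ≠ 0`. -/
theorem finite_Cid_mem_Auslander_class (R : Type) [CommRing R] [IsNoetherianRing R] [IsLocalRing R]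
    (C : Type) [AddCommGroup C] [Module R C] (hC : IsSemidualizing R C)
    (M : Type) [AddCommGroup M] [Module R M] [Module.Finite R M]
    (hCid : ∃ n : ℕ, CidLE R C n M inferInstance inferInstance) :
    Module.Finite R (TensorProduct R C M) ∧
    (∃ n : ℕ, idLE R n (TensorProduct R C M) inferInstance inferInstance) ∧
    Function.Bijective ((TensorProduct.mk R C M).flip) ∧
    (Nontrivial M → Nontrivial (TensorProduct R C M)) :=
  finite_Cid_mem_Auslander_class_general R C hC M hCid
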